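/- arXiv:1106.1235 — 4 statements merged into one kernel-verified Lean document; each statement's English description precedes it below -/
import Mathlib

section
/- Let B be a deterministic complete finite automaton over Γ × {0,1} such that: for every γ ∈ Γ there is no ((γ,0),(γ,0))-pattern, and for all distinct γ₁, γ₂ ∈ Γ the existence of a ((γ₁,0),(γ₂,0))-pattern excludes the existence of a ((γ₂,0),(γ₁,0))-pattern. Then there exists a linear ordering γ₁, ..., γₖ of Γ such that B contains no ((γᵢ,0),(γⱼ,0))-pattern with i ≥ j. -/
/-- One zero-transition step in the transition graph `G₀`:
there is an arc from `q` to `q'` labeled `(γ, 0)` for some `γ`. -/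
def Step0 {Q Γ : Type} (δ : Q → Γ × Bool → Q) (q q' : Q) : Prop :=
  ∃ γ : Γ, δ q (γ, false) = q'

/-- Reachability in `G₀`. -/
def Reach0 {Q Γ : Type} (δ : Q → Γ × Bool → Q) : Q → Q → Prop :=
  Relation.ReflTransGen (Step0 δ)

/-- `q` lies on a nontrivial cycle of `G₀`. -/
def ZeroCyclic {Q Γ : Type} (δ : Q → Γ × Bool → Q) (q : Q) : Prop :=
  ∃ q', Step0 δ q q' ∧ Reach0 δ q' q

/-- `q` lies on a cycle of the graph `G_{(γ,0)}` of `(γ,0)`-arcs. -/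
def GammaCyclic {Q Γ : Type} (δ : Q → Γ × Bool → Q) (γ : Γ) (q : Q) : Prop :=
  ∃ n : ℕ, 1 ≤ n ∧ (fun p => δ p (γ, false))^[n] q = q

/-- A `((γ₁,0),(γ₂,0))`-pattern: states `q₁ q₂ q₃ q₄` with
`δ(q₁,(γ₁,0)) = q₂`, `q₃` reachable from `q₂` in `G₀`, `δ(q₃,(γ₂,0)) = q₄`,
`q₁` 0-cyclic and `q₃` `(γ₂,0)`-acyclic. -/
def Pattern {Q Γ : Type} (δ : Q → Γ × Bool → Q) (γ₁ γ₂ : Γ) : Prop :=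
  ∃ q₁ q₂ q₃ q₄ : Q,
    δ q₁ (γ₁, false) = q₂ ∧ Reach0 δ q₂ q₃ ∧ δ q₃ (γ₂, false) = q₄ ∧
    ZeroCyclic δ q₁ ∧ ¬ GammaCyclic δ γ₂ q₃

/-- `B` is a 0-priority finite automaton: the letters can be linearly ordered
so that there is no `((γᵢ,0),(γⱼ,0))`-pattern with `i ≥ j`. -/
def ZeroPriority {Q Γ : Type} (δ : Q → Γ × Bool → Q) : Prop :=
  ∃ ord : Γ → ℕ, Function.Injective ord ∧
    ∀ γ γ' : Γ, ord γ' ≤ ord γ → ¬ Pattern δ γ γ'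

/-- Conversely, if there is no `((γ,0),(γ,0))`-pattern for any `γ`, and for
distinct letters the existence of a `((γ₁,0),(γ₂,0))`-pattern excludes a
`((γ₂,0),(γ₁,0))`-pattern, then the letters can be linearly ordered so that
there is no `((γᵢ,0),(γⱼ,0))`-pattern with `i ≥ j`. -/
theorem irrefl_asymm_implies_zero_priority_order {Q Γ : Type} [Fintype Q] [Fintype Γ]
    (δ : Q → Γ × Bool → Q)
    (h1 : ∀ γ : Γ, ¬ Pattern δ γ γ)
    (h2 : ∀ γ₁ γ₂ : Γ, γ₁ ≠ γ₂ → Pattern δ γ₁ γ₂ → ¬ Pattern δ γ₂ γ₁) :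
    ∃ ord : Γ → ℕ, Function.Injective ord ∧
      ∀ γ γ' : Γ, ord γ' ≤ ord γ → ¬ Pattern δ γ γ' := by
  classical
  -- Reachability along iterated (c,0)-edges
  have hreach : ∀ (c : Γ) (k : ℕ) (x : Q),
      Reach0 δ x ((fun p => δ p (c, false))^[k] x) := by
    intro c k
    induction k with
    | zero => intro x; exact Relation.ReflTransGen.refl
    | succ k ih =>
      intro x
      rw [Function.iterate_succ_apply]
      exact Relation.ReflTransGen.head ⟨c, rfl⟩ (ih _)
  -- Key: Pattern is transitive under h1, h2
  have key : ∀ a b c : Γ, Pattern δ a b → Pattern δ b c → Pattern δ a c := by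
    intro a b c hab hbc
    obtain ⟨q₁, q₂, q₃, q₄, h12, h23, _h34, hcyc, hacyc⟩ := hab
    by_cases hc : GammaCyclic δ c q₃
    · exfalso
      obtain ⟨n, hn, hfix⟩ := hc
      have hloop : Reach0 δ (δ q₃ (c, false)) q₃ := by
        have h := hreach c (n - 1) (δ q₃ (c, false))
        have heq : (fun p => δ p (c, false))^[n - 1] (δ q₃ (c, false)) = q₃ := by
          rw [← Function.iterate_succ_apply, Nat.succ_eq_add_one, Nat.sub_add_cancel hn, hfix]
        rwa [heq] at h
      have hzc : ZeroCyclic δ q₃ := ⟨δ q₃ (c, false), ⟨c, rfl⟩, hloop⟩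
      have hcb : Pattern δ c b :=
        ⟨q₃, δ q₃ (c, false), q₃, δ q₃ (b, false), rfl, hloop, rfl, hzc, hacyc⟩
      have hbc' : b ≠ c := by
        intro e; exact h1 b (e ▸ hbc)
      exact h2 b c hbc' hbc hcb
    · exact ⟨q₁, q₂, q₃, δ q₃ (c, false), h12, h23, rfl, hcyc, hc⟩
  -- Build the ordering: count Pattern-predecessors, break ties with an injection
  set N := Fintype.card Γ with hN
  let e := Fintype.equivFin Γ
  let below : Γ → Finset Γ := fun γ => Finset.univ.filter (fun x => Pattern δ x γ)
  let ord : Γ → ℕ := fun γ => (below γ).card * N + (e γ : ℕ)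
  have hlt : ∀ γ : Γ, (e γ : ℕ) < N := fun γ => (e γ).isLt
  have hmono : ∀ γ γ' : Γ, Pattern δ γ γ' → (below γ).card < (below γ').card := by
    intro γ γ' hp
    apply Finset.card_lt_card
    constructor
    · intro x hx
      simp only [below, Finset.mem_filter, Finset.mem_univ, true_and] at hx ⊢
      exact key x γ γ' hx hp
    · intro hsub
      have hγ : γ ∈ below γ' := by
        simp only [below, Finset.mem_filter, Finset.mem_univ, true_and]; exact hp
      have := hsub hγ
      simp only [below, Finset.mem_filter, Finset.mem_univ, true_and] at this
      exact h1 γ this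
  refine ⟨ord, ?_, ?_⟩
  · intro γ γ' h
    have hmod : (e γ : ℕ) = (e γ' : ℕ) := by
      have h1' := congrArg (· % N) h
      simp only [ord] at h1'
      rwa [Nat.mul_comm ((below γ).card) N, Nat.mul_comm ((below γ').card) N,
        Nat.mul_add_mod, Nat.mul_add_mod, Nat.mod_eq_of_lt (hlt γ),
        Nat.mod_eq_of_lt (hlt γ')] at h1'
    exact e.injective (Fin.ext hmod)
  · intro γ γ' hle hp
    have hc : (below γ).card < (below γ').card := hmono γ γ' hp
    have : ord γ < ord γ' := by
      have : (below γ).card * N + (e γ : ℕ) < ((below γ).card + 1) * N := by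
        have := hlt γ; nlinarith
      calc ord γ < ((below γ).card + 1) * N := this
        _ ≤ (below γ').card * N := Nat.mul_le_mul_right N hc
        _ ≤ ord γ' := Nat.le_add_right _ _
    omega
end

section
/- Let B be a 0-priority finite automaton. For every nontrivial strongly connected component C of G₀ and every label (γ,0) occurring on an arc of C, every state in C is (γ,0)-cyclic. -/
/-- In a 0-priority finite automaton, for every nontrivial strongly connected
component `C` of `G₀` and every label `(γ,0)` occurring on an arc of `C`,
every state in `C` is `(γ,0)`-cyclic. -/
theorem scc_label_gamma_cyclic {Q Γ : Type} [Fintype Q]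
    (δ : Q → Γ × Bool → Q) (hB : ZeroPriority δ) (C : Set Q)
    (hconn : ∀ a ∈ C, ∀ b ∈ C, Reach0 δ a b)
    (hmax : ∀ a ∈ C, ∀ b : Q, Reach0 δ a b → Reach0 δ b a → b ∈ C)
    (hnontriv : ∃ a ∈ C, ∃ b ∈ C, Step0 δ a b)
    (γ : Γ) (hlabel : ∃ a ∈ C, δ a (γ, false) ∈ C) :
    ∀ q ∈ C, GammaCyclic δ γ q := by
  intro q hq
  by_contra h
  obtain ⟨ord, _, hpat⟩ := hB
  obtain ⟨a, ha, hac⟩ := hlabel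
  exact hpat γ γ le_rfl
    ⟨a, δ a (γ, false), q, δ q (γ, false), rfl, hconn _ hac _ hq, rfl,
      ⟨δ a (γ, false), ⟨γ, rfl⟩, hconn _ hac _ ha⟩, h⟩
end

section
/- Let B be a 0-priority finite automaton. If a state q is reachable in G₀ from some 0-cyclic state, then q is itself 0-cyclic. Equivalently, no 0-acyclic state is reachable in G₀ from a 0-cyclic state. -/
/-- In a 0-priority finite automaton, any state reachable in `G₀` from a
0-cyclic state is itself 0-cyclic. -/
theorem reach_from_zero_cyclic {Q Γ : Type} [Fintype Q]
    (δ : Q → Γ × Bool → Q) (hB : ZeroPriority δ)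
    (q q' : Q) (hcyc : ZeroCyclic δ q) (hreach : Reach0 δ q q') :
    ZeroCyclic δ q' := by
  have reach_iter : ∀ (γ : Γ) (n : ℕ) (p : Q),
      Reach0 δ p ((fun r => δ r (γ, false))^[n] p) := by
    intro γ n
    induction n with
    | zero => intro p; exact Relation.ReflTransGen.refl
    | succ m ih =>
      intro p
      rw [Function.iterate_succ_apply]
      exact Relation.ReflTransGen.head ⟨γ, rfl⟩ (ih _)
  have step_lemma : ∀ p p' : Q, ZeroCyclic δ p → Step0 δ p p' → ZeroCyclic δ p' := by
    intro p p' hp ⟨γ, hstep⟩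
    obtain ⟨ord, _, hno⟩ := hB
    have hgc : GammaCyclic δ γ p' := by
      by_contra hng
      exact hno γ γ le_rfl ⟨p, p', p', δ p' (γ, false), hstep,
        Relation.ReflTransGen.refl, rfl, hp, hng⟩
    obtain ⟨n, hn, hfix⟩ := hgc
    refine ⟨δ p' (γ, false), ⟨γ, rfl⟩, ?_⟩
    have : (fun r => δ r (γ, false))^[n - 1] (δ p' (γ, false)) = p' := by
      have := hfix
      rw [show n = (n - 1) + 1 from (Nat.succ_pred_eq_of_pos hn).symm,
        Function.iterate_succ_apply] at this
      exact this
    nth_rewrite 2 [← this]; exact reach_iter γ (n - 1) (δ p' (γ, false))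
  induction hreach with
  | refl => exact hcyc
  | tail _ hstep ih => exact step_lemma _ _ ih hstep
end

section
/- Let B be a 0-priority finite automaton under the ordering γ₁,...,γₗ of Γ, and for 1 ≤ i ≤ l let Acycᵢ be the set of 0-cyclic states that are (γᵢ,0)-acyclic. Then Acycᵢ ⊆ Acyc_{i+1} for each i < l. -/
lemma reach0_iterate {Q Γ : Type} (δ : Q → Γ × Bool → Q) (γ : Γ) (q : Q) :
    ∀ n : ℕ, Reach0 δ q ((fun p => δ p (γ, false))^[n] q) := by
  intro n
  induction n with
  | zero => exact Relation.ReflTransGen.refl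
  | succ m ih =>
    rw [Function.iterate_succ_apply']
    exact ih.tail ⟨γ, rfl⟩

/-- Let the letters of `Γ` be ordered as `e 0, ..., e (l-1)` witnessing
0-priority, and let `Acyc i` be the set of 0-cyclic states that are
`(e i, 0)`-acyclic. Then `Acyc i ⊆ Acyc (i+1)` for each `i < l - 1`. -/
theorem acyc_monotone {Q Γ : Type} [Fintype Q] {l : ℕ}
    (δ : Q → Γ × Bool → Q) (e : Fin l ≃ Γ)
    (hord : ∀ i j : Fin l, j ≤ i → ¬ Pattern δ (e i) (e j)) :
    ∀ (i : Fin l) (h : (i : ℕ) + 1 < l),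
      {q : Q | ZeroCyclic δ q ∧ ¬ GammaCyclic δ (e i) q} ⊆
      {q : Q | ZeroCyclic δ q ∧ ¬ GammaCyclic δ (e ⟨(i : ℕ) + 1, h⟩) q} := by
  intro i h q hq
  obtain ⟨hcyc, hacyc⟩ := hq
  refine ⟨hcyc, ?_⟩
  rintro ⟨n, hn, hit⟩
  set γ₁ := e ⟨(i : ℕ) + 1, h⟩
  apply hord ⟨(i : ℕ) + 1, h⟩ i (by simp [Fin.le_def])
  refine ⟨q, δ q (γ₁, false), q, δ q (e i, false), rfl, ?_, rfl, hcyc, hacyc⟩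
  have : (fun p => δ p (γ₁, false))^[n - 1] (δ q (γ₁, false)) = q := by
    have := hit
    rwa [show n = (n - 1) + 1 by omega, Function.iterate_succ_apply] at this
  have h2 := reach0_iterate δ γ₁ (δ q (γ₁, false)) (n - 1)
  rwa [this] at h2
end
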